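/- arXiv:2601.21137 — 3 statements merged into one kernel-verified Lean document; each statement's English description precedes it below -/
import Mathlib

section
/- Let n ≥ 3 and let U = {x ∈ ℝⁿ : x_n > 0} be the upper half-space. Suppose f : U → ℝ is a smooth function satisfying the system (S): (a) ∂²f/∂x_i∂x_j = 0 for all distinct i, j ∈ {1,…,n−1}; (b) x_n·∂²f/∂x_i∂x_n + ∂f/∂x_i = 0 for every i ∈ {1,…,n−1}; (c) x_n²·∂²f/∂x_i² − x_n·∂f/∂x_n = f for every i ∈ {1,…,n−1}; (d) x_n²·∂²f/∂x_n² + x_n·∂f/∂x_n = f, at every point of U. Then there exist real constants a, b, b_1,…,b_{n−1}, c_1,…,c_{n−1} such that f(x) = (1/x_n)·Σ_{j=1}^{n−1} ((a/2)x_j² + b_j x_j + c_j) + (a/2)x_n + b/x_n for all x ∈ U. -/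
/-- The Euclidean partial derivative `∂f/∂x_i` of a function `f : ℝⁿ → ℝ`. -/
noncomputable def pderiv' {n : ℕ} (f : (Fin n → ℝ) → ℝ) (i : Fin n) (x : Fin n → ℝ) : ℝ :=
  fderiv ℝ f x (Pi.single i 1)

open scoped ContDiff in
lemma two_le_inf : (2 : WithTop ℕ∞) ≤ ∞ := by
  exact_mod_cast ENat.natCast_le_of_coe_top_le_withTop le_rfl 2

open scoped ContDiff in
lemma one_le_inf : (1 : WithTop ℕ∞) ≤ ∞ := by
  exact_mod_cast ENat.natCast_le_of_coe_top_le_withTop le_rfl 1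

open scoped ContDiff in
lemma inf_add_one_le : ∞ + 1 ≤ ∞ := by norm_cast

section helpers
variable {N : ℕ} {φ ψ : (Fin N → ℝ) → ℝ} {x : Fin N → ℝ} {v : Fin N}

lemma contDiffAt_pderiv' (hφ : ContDiffAt ℝ (⊤ : ℕ∞) φ x) :
    ContDiffAt ℝ (⊤ : ℕ∞) (pderiv' φ v) x := by
  have h1 : ContDiffAt ℝ (⊤ : ℕ∞) (fderiv ℝ φ) x := hφ.fderiv_right inf_add_one_le
  exact h1.clm_apply contDiffAt_const

lemma pderiv'_congr (h : φ =ᶠ[nhds x] ψ) : pderiv' φ v x = pderiv' ψ v x := by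
  unfold pderiv'; rw [h.fderiv_eq]

lemma pderiv'_sub (h1 : DifferentiableAt ℝ φ x) (h2 : DifferentiableAt ℝ ψ x) :
    pderiv' (fun y => φ y - ψ y) v x = pderiv' φ v x - pderiv' ψ v x := by
  unfold pderiv'; rw [fderiv_fun_sub h1 h2]; rfl

lemma pderiv'_add (h1 : DifferentiableAt ℝ φ x) (h2 : DifferentiableAt ℝ ψ x) :
    pderiv' (fun y => φ y + ψ y) v x = pderiv' φ v x + pderiv' ψ v x := by
  unfold pderiv'; rw [fderiv_fun_add h1 h2]; rfl

lemma pderiv'_mul (h1 : DifferentiableAt ℝ φ x) (h2 : DifferentiableAt ℝ ψ x) :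
    pderiv' (fun y => φ y * ψ y) v x = φ x * pderiv' ψ v x + ψ x * pderiv' φ v x := by
  unfold pderiv'; rw [fderiv_fun_mul h1 h2]; rfl

lemma pderiv'_inv (h2 : DifferentiableAt ℝ ψ x) (hz : ψ x ≠ 0) :
    pderiv' (fun y => (ψ y)⁻¹) v x = -pderiv' ψ v x / ψ x ^ 2 := by
  unfold pderiv'
  have : (fun y => (ψ y)⁻¹) = Inv.inv ∘ ψ := rfl
  rw [this, (((hasFDerivAt_inv' (𝕜 := ℝ) hz).comp x h2.hasFDerivAt)).fderiv]
  simp [ContinuousLinearMap.comp_apply]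
  field_simp

lemma pderiv'_div (h1 : DifferentiableAt ℝ φ x) (h2 : DifferentiableAt ℝ ψ x) (hz : ψ x ≠ 0) :
    pderiv' (fun y => φ y / ψ y) v x
      = (pderiv' φ v x * ψ x - φ x * pderiv' ψ v x) / ψ x ^ 2 := by
  simp only [div_eq_mul_inv]
  rw [pderiv'_mul h1 (h2.fun_inv hz), pderiv'_inv h2 hz]
  field_simp
  ring

lemma pderiv'_const_mul (h1 : DifferentiableAt ℝ φ x) (c : ℝ) :
    pderiv' (fun y => c * φ y) v x = c * pderiv' φ v x := by
  unfold pderiv'; rw [fderiv_const_mul h1 c]; rfl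

lemma pderiv'_const (c : ℝ) : pderiv' (fun _ => c) v x = 0 := by
  unfold pderiv'; rw [fderiv_fun_const]; rfl

lemma pderiv'_coord (j : Fin N) :
    pderiv' (fun y => y j) v x = (Pi.single v 1 : Fin N → ℝ) j := by
  unfold pderiv'
  rw [show (fun y : Fin N → ℝ => y j)
      = (ContinuousLinearMap.proj j : (Fin N → ℝ) →L[ℝ] ℝ) from rfl,
    ContinuousLinearMap.fderiv]
  rfl

lemma pderiv'_sum {ι : Type*} (s : Finset ι) (F : ι → (Fin N → ℝ) → ℝ)
    (h : ∀ i ∈ s, DifferentiableAt ℝ (F i) x) :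
    pderiv' (fun y => ∑ i ∈ s, F i y) v x = ∑ i ∈ s, pderiv' (F i) v x := by
  unfold pderiv'; rw [fderiv_fun_sum h, ContinuousLinearMap.sum_apply]

lemma clm_eq_zero_of_single (L : (Fin N → ℝ) →L[ℝ] ℝ)
    (H : ∀ i, L (Pi.single i 1) = 0) : L = 0 := by
  have hrep : ∀ w : Fin N → ℝ, w = ∑ i, Pi.single i (w i) := by
    intro w; rw [Finset.univ_sum_single]
  ext w
  rw [ContinuousLinearMap.zero_apply, hrep w, map_sum]
  refine Finset.sum_eq_zero fun i _ => ?_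
  have h2 : Pi.single i (w i) = w i • (Pi.single i 1 : Fin N → ℝ) := by
    ext j; by_cases h : j = i <;> simp [Pi.single_apply, h]
  rw [h2, map_smul, H i, smul_zero]


lemma diffAt_of_contDiffAtTop (hφ : ContDiffAt ℝ (⊤ : ℕ∞) φ x) : DifferentiableAt ℝ φ x :=
  hφ.differentiableAt (by simp)

lemma isConst_of_pderiv'_zero {S : Set (Fin N → ℝ)} (hSo : IsOpen S) (hSc : Convex ℝ S)
    (hd : ∀ y ∈ S, DifferentiableAt ℝ φ y)
    (hz : ∀ y ∈ S, ∀ i, pderiv' φ i y = 0)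
    {p q : Fin N → ℝ} (hp : p ∈ S) (hq : q ∈ S) : φ p = φ q := by
  apply hSc.is_const_of_fderivWithin_eq_zero
    (fun y hy => (hd y hy).differentiableWithinAt) ?_ hp hq
  intro y hy
  rw [fderivWithin_of_isOpen hSo hy]
  exact clm_eq_zero_of_single _ (fun i => hz y hy i)

lemma pderiv'_pderiv' (hφ : ContDiffAt ℝ (⊤ : ℕ∞) φ x) (u : Fin N) :
    pderiv' (pderiv' φ u) v x
      = fderiv ℝ (fderiv ℝ φ) x (Pi.single v 1) (Pi.single u 1) := by
  have h1 : ContDiffAt ℝ (⊤ : ℕ∞) (fderiv ℝ φ) x := hφ.fderiv_right inf_add_one_le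
  have hd : DifferentiableAt ℝ (fderiv ℝ φ) x := h1.differentiableAt (by simp)
  show fderiv ℝ (fun y => (fderiv ℝ φ y) (Pi.single u 1)) x (Pi.single v 1) = _
  rw [fderiv_clm_apply hd (differentiableAt_const _)]
  simp

lemma pderiv'_symm (hφ : ContDiffAt ℝ (⊤ : ℕ∞) φ x) (u v' : Fin N) :
    pderiv' (pderiv' φ u) v' x = pderiv' (pderiv' φ v') u x := by
  rw [pderiv'_pderiv' hφ u, pderiv'_pderiv' hφ v']
  exact (hφ.isSymmSndFDerivAt (by rw [minSmoothness_of_isRCLikeNormedField]; exact two_le_inf)).eq _ _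

end helpers

/-- Let `n = m + 1 ≥ 3` and `U = {x ∈ ℝⁿ | xₙ > 0}` be the upper half-space
(the last coordinate `x (Fin.last m)` plays the role of `xₙ`; the indices `i.castSucc` for
`i : Fin m` are the first `n - 1` coordinates).  If `f` is smooth on `U` and satisfies the
system (S): (a) `∂²f/∂xᵢ∂xⱼ = 0` for distinct `i, j ≤ n-1`; (b) `xₙ ∂²f/∂xᵢ∂xₙ + ∂f/∂xᵢ = 0`
for `i ≤ n-1`; (c) `xₙ² ∂²f/∂xᵢ² - xₙ ∂f/∂xₙ = f` for `i ≤ n-1`;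
(d) `xₙ² ∂²f/∂xₙ² + xₙ ∂f/∂xₙ = f` on `U`, then there are constants `a, b, bⱼ, cⱼ` with
`f x = (1/xₙ) ∑ⱼ (a/2 xⱼ² + bⱼ xⱼ + cⱼ) + a/2 xₙ + b/xₙ` on `U`. -/
theorem stmt_0 {m : ℕ} (hm : 2 ≤ m)
    (f : (Fin (m + 1) → ℝ) → ℝ)
    (hf : ContDiffOn ℝ (⊤ : ℕ∞) f {x : Fin (m + 1) → ℝ | 0 < x (Fin.last m)})
    (ha : ∀ x : Fin (m + 1) → ℝ, 0 < x (Fin.last m) → ∀ i j : Fin m, i ≠ j →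
      pderiv' (pderiv' f j.castSucc) i.castSucc x = 0)
    (hb : ∀ x : Fin (m + 1) → ℝ, 0 < x (Fin.last m) → ∀ i : Fin m,
      x (Fin.last m) * pderiv' (pderiv' f (Fin.last m)) i.castSucc x
        + pderiv' f i.castSucc x = 0)
    (hc : ∀ x : Fin (m + 1) → ℝ, 0 < x (Fin.last m) → ∀ i : Fin m,
      x (Fin.last m) ^ 2 * pderiv' (pderiv' f i.castSucc) i.castSucc x
        - x (Fin.last m) * pderiv' f (Fin.last m) x = f x)
    (hd : ∀ x : Fin (m + 1) → ℝ, 0 < x (Fin.last m) →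
      x (Fin.last m) ^ 2 * pderiv' (pderiv' f (Fin.last m)) (Fin.last m) x
        + x (Fin.last m) * pderiv' f (Fin.last m) x = f x) :
    ∃ (a b : ℝ) (B C : Fin m → ℝ), ∀ x : Fin (m + 1) → ℝ, 0 < x (Fin.last m) →
      f x = (1 / x (Fin.last m)) *
          (∑ j : Fin m, (a / 2 * x j.castSucc ^ 2 + B j * x j.castSucc + C j))
        + a / 2 * x (Fin.last m) + b / x (Fin.last m) := by
  classical
  set lst := Fin.last m with hlst
  set U : Set (Fin (m + 1) → ℝ) := {x | 0 < x lst} with hUdef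
  have hUo : IsOpen U := isOpen_lt continuous_const (continuous_apply lst)
  have hUc : Convex ℝ U := convex_halfSpace_gt ⟨fun y z => rfl, fun c y => rfl⟩ 0
  have hmemU : ∀ x : Fin (m+1) → ℝ, x ∈ U ↔ 0 < x lst := fun x => Iff.rfl
  have hp : (fun _ => (1:ℝ)) ∈ U := by rw [hmemU]; norm_num
  set p : Fin (m+1) → ℝ := fun _ => 1 with hpdef
  -- values of Pi.single
  have s1 : (Pi.single lst (1:ℝ) : Fin (m+1) → ℝ) lst = 1 := Pi.single_eq_same _ _
  have s2 : ∀ i : Fin m, (Pi.single i.castSucc (1:ℝ) : Fin (m+1) → ℝ) lst = 0 :=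
    fun i => Pi.single_eq_of_ne (Fin.castSucc_lt_last i).ne' 1
  have s3 : ∀ i j : Fin m, (Pi.single i.castSucc (1:ℝ) : Fin (m+1) → ℝ) j.castSucc
      = if j = i then 1 else 0 := by
    intro i j; rw [Pi.single_apply]; simp [Fin.castSucc_inj]
  have s4 : ∀ i : Fin m, (Pi.single lst (1:ℝ) : Fin (m+1) → ℝ) i.castSucc = 0 :=
    fun i => Pi.single_eq_of_ne (Fin.castSucc_lt_last i).ne 1
  -- differentiability bookkeeping
  have hfx : ∀ x ∈ U, ContDiffAt ℝ (⊤:ℕ∞) f x := fun x hx => hf.contDiffAt (hUo.mem_nhds hx)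
  have hdcoord : ∀ (j : Fin (m+1)) (x : Fin (m+1) → ℝ),
      DifferentiableAt ℝ (fun y : Fin (m+1) → ℝ => y j) x :=
    fun j x => (ContinuousLinearMap.proj j : (Fin (m+1) → ℝ) →L[ℝ] ℝ).differentiableAt
  have hccoord : ∀ (j : Fin (m+1)) (x : Fin (m+1) → ℝ),
      ContDiffAt ℝ (⊤:ℕ∞) (fun y : Fin (m+1) → ℝ => y j) x :=
    fun j x => (ContinuousLinearMap.proj j : (Fin (m+1) → ℝ) →L[ℝ] ℝ).contDiff.contDiffAt
  set g : (Fin (m+1) → ℝ) → ℝ := fun y => y lst * f y with hgdef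
  have hgx : ∀ x ∈ U, ContDiffAt ℝ (⊤:ℕ∞) g x := by
    intro x hx; rw [hgdef]; exact (hccoord lst x).mul (hfx x hx)
  have hdf : ∀ x ∈ U, DifferentiableAt ℝ f x := fun x hx => diffAt_of_contDiffAtTop (hfx x hx)
  have hdg : ∀ x ∈ U, DifferentiableAt ℝ g x := fun x hx => diffAt_of_contDiffAtTop (hgx x hx)
  have hdpf : ∀ x ∈ U, ∀ u, DifferentiableAt ℝ (pderiv' f u) x :=
    fun x hx _ => diffAt_of_contDiffAtTop (contDiffAt_pderiv' (hfx x hx))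
  have hdpg : ∀ x ∈ U, ∀ u, DifferentiableAt ℝ (pderiv' g u) x :=
    fun x hx _ => diffAt_of_contDiffAtTop (contDiffAt_pderiv' (hgx x hx))
  have hxne : ∀ x ∈ U, x lst ≠ 0 := fun x hx => ne_of_gt hx
  -- first derivatives of g
  have hg1 : ∀ x ∈ U, ∀ v, pderiv' g v x
      = x lst * pderiv' f v x + f x * (Pi.single v 1 : Fin (m+1) → ℝ) lst := by
    intro x hx v
    rw [hgdef, pderiv'_mul (hdcoord lst x) (hdf x hx), pderiv'_coord]
  have hg1i : ∀ x ∈ U, ∀ i : Fin m, pderiv' g i.castSucc x = x lst * pderiv' f i.castSucc x := by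
    intro x hx i; rw [hg1 x hx, s2 i, mul_zero, add_zero]
  have hg1n : ∀ x ∈ U, pderiv' g lst x = x lst * pderiv' f lst x + f x := by
    intro x hx; rw [hg1 x hx, s1, mul_one]
  -- second derivatives of g
  have hg2i : ∀ x ∈ U, ∀ i : Fin m, ∀ v, pderiv' (pderiv' g i.castSucc) v x
      = x lst * pderiv' (pderiv' f i.castSucc) v x
        + pderiv' f i.castSucc x * (Pi.single v 1 : Fin (m+1) → ℝ) lst := by
    intro x hx i v
    have hcg : pderiv' g i.castSucc =ᶠ[nhds x] fun y => y lst * pderiv' f i.castSucc y :=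
      Filter.eventuallyEq_of_mem (hUo.mem_nhds hx) (fun y hy => hg1i y hy i)
    rw [pderiv'_congr hcg, pderiv'_mul (hdcoord lst x) (hdpf x hx i.castSucc), pderiv'_coord]
  have hg2n : ∀ x ∈ U, ∀ v, pderiv' (pderiv' g lst) v x
      = x lst * pderiv' (pderiv' f lst) v x
        + pderiv' f lst x * (Pi.single v 1 : Fin (m+1) → ℝ) lst + pderiv' f v x := by
    intro x hx v
    have hcg : pderiv' g lst =ᶠ[nhds x] fun y => y lst * pderiv' f lst y + f y :=
      Filter.eventuallyEq_of_mem (hUo.mem_nhds hx) (fun y hy => hg1n y hy)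
    rw [pderiv'_congr hcg,
      pderiv'_add ((hdcoord lst x).fun_mul (hdpf x hx lst)) (hdf x hx),
      pderiv'_mul (hdcoord lst x) (hdpf x hx lst), pderiv'_coord]
  -- the key second-order identities for g
  have C2 : ∀ x ∈ U, ∀ i : Fin m, pderiv' (pderiv' g lst) i.castSucc x = 0 := by
    intro x hx i
    rw [hg2n x hx i.castSucc, s2 i]
    linear_combination hb x hx i
  have C4 : ∀ x ∈ U, x lst * pderiv' (pderiv' g lst) lst x = pderiv' g lst x := by
    intro x hx
    rw [hg2n x hx lst, s1, hg1n x hx]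
    linear_combination hd x hx
  -- ∂g/∂x_n = a · x_n
  set ψ : (Fin (m+1) → ℝ) → ℝ := fun y => pderiv' g lst y / y lst with hψdef
  have hψz : ∀ x ∈ U, ∀ v, pderiv' ψ v x = 0 := by
    intro x hx v
    rw [hψdef, pderiv'_div (hdpg x hx lst) (hdcoord lst x) (hxne x hx), pderiv'_coord]
    induction v using Fin.lastCases with
    | last =>
      rw [s1, mul_one, div_eq_zero_iff]
      left
      linear_combination C4 x hx
    | cast i => rw [s2 i, mul_zero, sub_zero, C2 x hx i, zero_mul, zero_div]
  set a : ℝ := ψ p with hadef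
  have hgn : ∀ x ∈ U, pderiv' g lst x = a * x lst := by
    intro x hx
    have hconst : ψ x = a := by
      rw [hadef]
      exact isConst_of_pderiv'_zero hUo hUc
        (fun y hy => by
          rw [hψdef]
          simpa only [div_eq_mul_inv] using
            (hdpg y hy lst).fun_mul ((hdcoord lst y).fun_inv (hxne y hy)))
        hψz hx hp
    rw [hψdef] at hconst
    simp only at hconst
    have := (div_eq_iff (hxne x hx)).1 hconst
    linarith
  -- ∂g/∂x_i = a · x_i + B' i
  set B' : Fin m → ℝ := fun i => pderiv' g i.castSucc p - a * p i.castSucc with hBdef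
  have hBi : ∀ x ∈ U, ∀ i : Fin m, pderiv' g i.castSucc x = a * x i.castSucc + B' i := by
    intro x hx i
    have hBz : ∀ y ∈ U, ∀ v,
        pderiv' (fun z => pderiv' g i.castSucc z - a * z i.castSucc) v y = 0 := by
      intro y hy v
      rw [pderiv'_sub (hdpg y hy i.castSucc) ((hdcoord i.castSucc y).const_mul a),
        pderiv'_const_mul (hdcoord i.castSucc y) a, pderiv'_coord]
      induction v using Fin.lastCases with
      | last =>
        rw [pderiv'_symm (hgx y hy) i.castSucc lst, C2 y hy i, s4 i, mul_zero, sub_zero]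
      | cast j =>
        rw [hg2i y hy i j.castSucc, s2 j, s3 j i]
        by_cases hji : j = i
        · subst hji
          rw [if_pos rfl]
          have hcc := hc y hy j
          have hgny := hgn y hy
          have hg1ny := hg1n y hy
          have hyne := hxne y hy
          have key : y lst * (y lst * pderiv' (pderiv' f j.castSucc) j.castSucc y)
              = y lst * a := by linear_combination hcc + hgny - hg1ny
          have key2 := mul_left_cancel₀ hyne key
          linear_combination key2
        · rw [if_neg (fun h : i = j => hji h.symm)]
          rw [ha y hy j i hji]
          ring
    have hconst := isConst_of_pderiv'_zero hUo hUc
      (fun y hy => (hdpg y hy i.castSucc).fun_sub ((hdcoord i.castSucc y).const_mul a)) hBz hx hp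
    rw [hBdef]
    simp only
    linarith
  -- gather: g is an explicit polynomial
  set P : (Fin (m+1) → ℝ) → ℝ := fun y =>
    (∑ j : Fin m, (a/2 * (y j.castSucc * y j.castSucc) + B' j * y j.castSucc))
      + a/2 * (y lst * y lst) with hPdef
  have hdPterm : ∀ (y : Fin (m+1) → ℝ) (j : Fin m), DifferentiableAt ℝ
      (fun z : Fin (m+1) → ℝ => a/2 * (z j.castSucc * z j.castSucc) + B' j * z j.castSucc) y :=
    fun y j => (((hdcoord j.castSucc y).mul (hdcoord j.castSucc y)).const_mul (a/2)).add
      ((hdcoord j.castSucc y).const_mul (B' j))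
  have hdP : ∀ y, DifferentiableAt ℝ P y := by
    intro y
    rw [hPdef]
    exact (DifferentiableAt.fun_sum (fun j _ => hdPterm y j)).fun_add
      (((hdcoord lst y).fun_mul (hdcoord lst y)).const_mul (a/2))
  have hPd : ∀ x ∈ U, ∀ v, pderiv' P v x
      = (∑ j : Fin m, (a * x j.castSucc + B' j) * (Pi.single v 1 : Fin (m+1) → ℝ) j.castSucc)
        + a * x lst * (Pi.single v 1 : Fin (m+1) → ℝ) lst := by
    intro x hx v
    rw [hPdef,
      pderiv'_add (DifferentiableAt.fun_sum (fun j _ => hdPterm x j))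
        (((hdcoord lst x).fun_mul (hdcoord lst x)).const_mul (a/2)),
      pderiv'_sum _ _ (fun j _ => hdPterm x j),
      pderiv'_const_mul ((hdcoord lst x).fun_mul (hdcoord lst x)) (a/2),
      pderiv'_mul (hdcoord lst x) (hdcoord lst x), pderiv'_coord]
    congr 1
    · apply Finset.sum_congr rfl
      intro j _
      rw [pderiv'_add (((hdcoord j.castSucc x).fun_mul (hdcoord j.castSucc x)).const_mul (a/2))
          ((hdcoord j.castSucc x).const_mul (B' j)),
        pderiv'_const_mul ((hdcoord j.castSucc x).fun_mul (hdcoord j.castSucc x)) (a/2),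
        pderiv'_mul (hdcoord j.castSucc x) (hdcoord j.castSucc x),
        pderiv'_const_mul (hdcoord j.castSucc x) (B' j), pderiv'_coord]
      ring
    · ring
  have hQz : ∀ x ∈ U, ∀ v, pderiv' (fun y => g y - P y) v x = 0 := by
    intro x hx v
    rw [pderiv'_sub (hdg x hx) (hdP x), hPd x hx v]
    induction v using Fin.lastCases with
    | last =>
      rw [hgn x hx, s1,
        Finset.sum_eq_zero (fun j _ => by rw [s4 j, mul_zero])]
      ring
    | cast i =>
      rw [hBi x hx i]
      simp only [s3, s2, mul_ite, mul_one, mul_zero, Finset.sum_ite_eq', Finset.mem_univ,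
        if_true]
      ring
  have hQc : ∀ x ∈ U, g x - P x = g p - P p :=
    fun x hx => isConst_of_pderiv'_zero hUo hUc
      (fun y hy => (hdg y hy).sub (hdP y)) hQz hx hp
  -- conclusion
  refine ⟨a, 0, B', fun _ => (g p - P p) / m, ?_⟩
  intro x hx0
  have hx : x ∈ U := hx0
  have hxn : x lst ≠ 0 := hxne x hx
  have hmne : (m:ℝ) ≠ 0 := Nat.cast_ne_zero.2 (by omega)
  have hkey : x lst * f x
      = (∑ j : Fin m, (a/2 * (x j.castSucc * x j.castSucc) + B' j * x j.castSucc))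
        + a/2 * (x lst * x lst) + (g p - P p) := by
    have h := hQc x hx
    rw [hgdef, hPdef] at h ⊢
    simp only at h ⊢
    linarith
  have hsum : (∑ j : Fin m, (a / 2 * x j.castSucc ^ 2 + B' j * x j.castSucc
        + (g p - P p) / m))
      = (∑ j : Fin m, (a/2 * (x j.castSucc * x j.castSucc) + B' j * x j.castSucc))
        + (g p - P p) := by
    rw [Finset.sum_add_distrib, Finset.sum_const, Finset.card_univ, Fintype.card_fin,
      nsmul_eq_mul, mul_div_cancel₀ _ hmne]
    congr 1
    exact Finset.sum_congr rfl (fun j _ => by ring)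
  rw [hsum]
  have h2 : f x = ((∑ j : Fin m, (a/2 * (x j.castSucc * x j.castSucc) + B' j * x j.castSucc))
      + a/2 * (x lst * x lst) + (g p - P p)) / x lst := by
    rw [eq_div_iff hxn]
    linear_combination hkey
  rw [h2]
  field_simp
  ring
end

section
/- Let n ≥ 3, let U = {x ∈ ℝⁿ : x_n > 0}, and let a, b, b_1,…,b_{n−1}, c_1,…,c_{n−1} be real constants. Define f : U → ℝ by f(x) = (1/x_n)·Σ_{j=1}^{n−1} ((a/2)x_j² + b_j x_j + c_j) + (a/2)x_n + b/x_n. Then f satisfies, at every point of U: (a) ∂²f/∂x_i∂x_j = 0 for all distinct i, j ∈ {1,…,n−1}; (b) x_n·∂²f/∂x_i∂x_n + ∂f/∂x_i = 0 for every i ∈ {1,…,n−1}; (c) x_n²·∂²f/∂x_i² − x_n·∂f/∂x_n = f for every i ∈ {1,…,n−1}; (d) x_n²·∂²f/∂x_n² + x_n·∂f/∂x_n = f. -/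
namespace Stmt1Aux

open Filter ContinuousLinearMap

lemma pderiv'_congr {n : ℕ} {f g : (Fin n → ℝ) → ℝ} {x : Fin n → ℝ}
    (h : f =ᶠ[nhds x] g) (i : Fin n) : pderiv' f i x = pderiv' g i x := by
  unfold pderiv'; rw [h.fderiv_eq]

lemma pderiv'_of_hasFDerivAt {n : ℕ} {f : (Fin n → ℝ) → ℝ} {x : Fin n → ℝ}
    {L : (Fin n → ℝ) →L[ℝ] ℝ} (h : HasFDerivAt f L x) (i : Fin n) :
    pderiv' f i x = L (Pi.single i 1) := by
  unfold pderiv'; rw [h.fderiv]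

variable {m : ℕ}

noncomputable def S (a : ℝ) (B C : Fin m → ℝ) (x : Fin (m + 1) → ℝ) : ℝ :=
  ∑ j : Fin m, (a / 2 * x j.castSucc ^ 2 + B j * x j.castSucc + C j)

noncomputable def g (a b : ℝ) (B C : Fin m → ℝ) (x : Fin (m + 1) → ℝ) : ℝ :=
  (1 / x (Fin.last m)) * S a B C x + a / 2 * x (Fin.last m) + b / x (Fin.last m)

noncomputable def g1 (a : ℝ) (B : Fin m → ℝ) (i : Fin m) (x : Fin (m + 1) → ℝ) : ℝ :=
  (x (Fin.last m))⁻¹ * (a * x i.castSucc + B i)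

noncomputable def gn (a b : ℝ) (B C : Fin m → ℝ) (x : Fin (m + 1) → ℝ) : ℝ :=
  a / 2 - (S a B C x + b) * (x (Fin.last m) ^ 2)⁻¹

noncomputable def P (k : Fin (m + 1)) : (Fin (m + 1) → ℝ) →L[ℝ] ℝ :=
  ContinuousLinearMap.proj k

lemma hasFDerivAt_coord (x : Fin (m + 1) → ℝ) (k : Fin (m + 1)) :
    HasFDerivAt (fun y : Fin (m + 1) → ℝ => y k) (P k) x :=
  hasFDerivAt_apply k x

lemma hasFDerivAt_S (a : ℝ) (B C : Fin m → ℝ) (x : Fin (m + 1) → ℝ) :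
    HasFDerivAt (S a B C)
      (∑ j : Fin m, (a * x j.castSucc + B j) • P j.castSucc) x := by
  have h : ∀ j : Fin m, HasFDerivAt
      (fun y : Fin (m + 1) → ℝ => a / 2 * y j.castSucc ^ 2 + B j * y j.castSucc + C j)
      ((a * x j.castSucc + B j) • P j.castSucc) x := by
    intro j
    have hj := hasFDerivAt_coord x j.castSucc
    have hsq : HasFDerivAt (fun y : Fin (m + 1) → ℝ => y j.castSucc ^ 2)
        ((2 * x j.castSucc ^ 1 : ℝ) • P j.castSucc) x := by
      have := (hasDerivAt_pow 2 (x j.castSucc)).comp_hasFDerivAt x hj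
      exact this.congr_fderiv (by norm_num)
    have h2 := (((hsq.const_mul (a / 2)).add (hj.const_mul (B j))).add_const (C j))
    exact h2.congr_fderiv (by ext v; simp [P, smul_eq_mul]; ring)
  exact HasFDerivAt.fun_sum (fun j _ => h j)

lemma hasFDerivAt_g (a b : ℝ) (B C : Fin m → ℝ) (x : Fin (m + 1) → ℝ)
    (h0 : x (Fin.last m) ≠ 0) :
    HasFDerivAt (g a b B C)
      ((x (Fin.last m))⁻¹ • (∑ j : Fin m, (a * x j.castSucc + B j) • P j.castSucc)
        + (a / 2 - (S a B C x + b) * (x (Fin.last m) ^ 2)⁻¹) • P (Fin.last m)) x := by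
  have ht := hasFDerivAt_coord x (Fin.last m)
  have hinv : HasFDerivAt (fun y : Fin (m + 1) → ℝ => (y (Fin.last m))⁻¹)
      ((-(x (Fin.last m) ^ 2)⁻¹ : ℝ) • P (Fin.last m)) x :=
    (hasDerivAt_inv h0).comp_hasFDerivAt x ht
  have hS := hasFDerivAt_S a B C x
  have heq : g a b B C = fun y => (y (Fin.last m))⁻¹ * S a B C y
      + a / 2 * y (Fin.last m) + b * (y (Fin.last m))⁻¹ := by
    funext y; simp [g, one_div, div_eq_mul_inv]
  rw [heq]
  have h := ((hinv.mul hS).add (ht.const_mul (a / 2))).add (hinv.const_mul b)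
  exact h.congr_fderiv (by ext v; simp [smul_eq_mul]; ring)

lemma hasFDerivAt_g1 (a : ℝ) (B : Fin m → ℝ) (i : Fin m) (x : Fin (m + 1) → ℝ)
    (h0 : x (Fin.last m) ≠ 0) :
    HasFDerivAt (g1 a B i)
      (((x (Fin.last m))⁻¹ * a) • P i.castSucc
        + (-(x (Fin.last m) ^ 2)⁻¹ * (a * x i.castSucc + B i)) • P (Fin.last m)) x := by
  have ht := hasFDerivAt_coord x (Fin.last m)
  have hi := hasFDerivAt_coord x i.castSucc
  have hinv : HasFDerivAt (fun y : Fin (m + 1) → ℝ => (y (Fin.last m))⁻¹)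
      ((-(x (Fin.last m) ^ 2)⁻¹ : ℝ) • P (Fin.last m)) x :=
    (hasDerivAt_inv h0).comp_hasFDerivAt x ht
  have h := hinv.mul ((hi.const_mul a).add_const (B i))
  exact h.congr_fderiv (by ext v; simp [smul_eq_mul]; ring)

lemma hasFDerivAt_gn (a b : ℝ) (B C : Fin m → ℝ) (x : Fin (m + 1) → ℝ)
    (h0 : x (Fin.last m) ≠ 0) :
    HasFDerivAt (gn a b B C)
      ((-(x (Fin.last m) ^ 2)⁻¹) • (∑ j : Fin m, (a * x j.castSucc + B j) • P j.castSucc)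
        + (2 * (S a B C x + b) * x (Fin.last m) * ((x (Fin.last m) ^ 2) ^ 2)⁻¹)
          • P (Fin.last m)) x := by
  have ht := hasFDerivAt_coord x (Fin.last m)
  have hq : HasFDerivAt (fun y : Fin (m + 1) → ℝ => (y (Fin.last m) ^ 2)⁻¹)
      ((-(2 * x (Fin.last m) ^ 1) / (x (Fin.last m) ^ 2) ^ 2 : ℝ) • P (Fin.last m)) x :=
    by
    have := ((hasDerivAt_pow 2 (x (Fin.last m))).inv (pow_ne_zero 2 h0)).comp_hasFDerivAt x ht
    exact this.congr_fderiv (by norm_num)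
  have hS := hasFDerivAt_S a B C x |>.add_const b
  have h := hS.mul hq |>.const_sub (a / 2)
  exact h.congr_fderiv (by ext v; simp [smul_eq_mul]; ring)

end Stmt1Aux

open Stmt1Aux Filter in
/-- Let `n = m + 1 ≥ 3`, `U = {x ∈ ℝⁿ | xₙ > 0}`, and constants
`a, b, bⱼ, cⱼ` be given.  If `f` is given on `U` by
`f x = (1/xₙ) ∑ⱼ (a/2 xⱼ² + bⱼ xⱼ + cⱼ) + a/2 xₙ + b/xₙ`, then `f` satisfies, at every
point of `U`: (a) `∂²f/∂xᵢ∂xⱼ = 0` for distinct `i, j ≤ n-1`;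
(b) `xₙ ∂²f/∂xᵢ∂xₙ + ∂f/∂xᵢ = 0` for `i ≤ n-1`; (c) `xₙ² ∂²f/∂xᵢ² - xₙ ∂f/∂xₙ = f`
for `i ≤ n-1`; (d) `xₙ² ∂²f/∂xₙ² + xₙ ∂f/∂xₙ = f`.
(The last coordinate `x (Fin.last m)` plays the role of `xₙ`.) -/
theorem stmt_1 {m : ℕ} (hm : 2 ≤ m) (a b : ℝ) (B C : Fin m → ℝ)
    (f : (Fin (m + 1) → ℝ) → ℝ)
    (hf : ∀ x : Fin (m + 1) → ℝ, 0 < x (Fin.last m) →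
      f x = (1 / x (Fin.last m)) *
          (∑ j : Fin m, (a / 2 * x j.castSucc ^ 2 + B j * x j.castSucc + C j))
        + a / 2 * x (Fin.last m) + b / x (Fin.last m)) :
    (∀ x : Fin (m + 1) → ℝ, 0 < x (Fin.last m) → ∀ i j : Fin m, i ≠ j →
      pderiv' (pderiv' f j.castSucc) i.castSucc x = 0) ∧
    (∀ x : Fin (m + 1) → ℝ, 0 < x (Fin.last m) → ∀ i : Fin m,
      x (Fin.last m) * pderiv' (pderiv' f (Fin.last m)) i.castSucc x
        + pderiv' f i.castSucc x = 0) ∧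
    (∀ x : Fin (m + 1) → ℝ, 0 < x (Fin.last m) → ∀ i : Fin m,
      x (Fin.last m) ^ 2 * pderiv' (pderiv' f i.castSucc) i.castSucc x
        - x (Fin.last m) * pderiv' f (Fin.last m) x = f x) ∧
    (∀ x : Fin (m + 1) → ℝ, 0 < x (Fin.last m) →
      x (Fin.last m) ^ 2 * pderiv' (pderiv' f (Fin.last m)) (Fin.last m) x
        + x (Fin.last m) * pderiv' f (Fin.last m) x = f x) := by
  have hU : IsOpen {y : Fin (m + 1) → ℝ | 0 < y (Fin.last m)} :=
    isOpen_lt continuous_const (continuous_apply _)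
  have hfg : ∀ x : Fin (m + 1) → ℝ, 0 < x (Fin.last m) → f =ᶠ[nhds x] g a b B C :=
    fun x hx => eventually_of_mem (hU.mem_nhds hx) (fun y hy => by rw [hf y hy]; rfl)
  -- first partial derivatives of f on U
  have hp1 : ∀ x : Fin (m + 1) → ℝ, 0 < x (Fin.last m) → ∀ i : Fin m,
      pderiv' f i.castSucc x = g1 a B i x := by
    intro x hx i
    rw [pderiv'_congr (hfg x hx) _,
      pderiv'_of_hasFDerivAt (hasFDerivAt_g a b B C x hx.ne') _]
    have hne : ∀ j : Fin m, (Fin.last m : Fin (m+1)) ≠ j.castSucc :=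
      fun j => (Fin.castSucc_lt_last j).ne'
    simp [P, Pi.single_apply, Fin.castSucc_inj, (hne i).symm, g1, mul_comm]
  have hpn : ∀ x : Fin (m + 1) → ℝ, 0 < x (Fin.last m) →
      pderiv' f (Fin.last m) x = gn a b B C x := by
    intro x hx
    rw [pderiv'_congr (hfg x hx) _,
      pderiv'_of_hasFDerivAt (hasFDerivAt_g a b B C x hx.ne') _]
    have hne : ∀ j : Fin m, (j.castSucc : Fin (m+1)) ≠ Fin.last m :=
      fun j => (Fin.castSucc_lt_last j).ne
    simp [P, Pi.single_apply, hne, gn]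
  -- eventual versions
  have hev1 : ∀ x : Fin (m + 1) → ℝ, 0 < x (Fin.last m) → ∀ i : Fin m,
      pderiv' f i.castSucc =ᶠ[nhds x] g1 a B i := fun x hx i =>
    eventually_of_mem (hU.mem_nhds hx) (fun y hy => hp1 y hy i)
  have hevn : ∀ x : Fin (m + 1) → ℝ, 0 < x (Fin.last m) →
      pderiv' f (Fin.last m) =ᶠ[nhds x] gn a b B C := fun x hx =>
    eventually_of_mem (hU.mem_nhds hx) (fun y hy => hpn y hy)
  have hne : ∀ j : Fin m, (j.castSucc : Fin (m+1)) ≠ Fin.last m :=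
    fun j => (Fin.castSucc_lt_last j).ne
  refine ⟨?_, ?_, ?_, ?_⟩
  · -- (a)
    intro x hx i j hij
    rw [pderiv'_congr (hev1 x hx j) _,
      pderiv'_of_hasFDerivAt (hasFDerivAt_g1 a B j x hx.ne') _]
    have : (j.castSucc : Fin (m+1)) ≠ i.castSucc := by
      simpa [Fin.castSucc_inj] using (Ne.symm hij)
    simp [P, Pi.single_apply, this.symm, hne i]
  · -- (b)
    intro x hx i
    rw [pderiv'_congr (hevn x hx) _,
      pderiv'_of_hasFDerivAt (hasFDerivAt_gn a b B C x hx.ne') _, hp1 x hx i]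
    have h0 := hx.ne'
    simp [P, Pi.single_apply, Fin.castSucc_inj, hne, g1]
    field_simp
    ring
  · -- (c)
    intro x hx i
    rw [pderiv'_congr (hev1 x hx i) _,
      pderiv'_of_hasFDerivAt (hasFDerivAt_g1 a B i x hx.ne') _, hpn x hx,
      hf x hx]
    have h0 := hx.ne'
    simp [P, Pi.single_apply, Fin.castSucc_inj, (hne i), gn]
    rw [show (∑ j : Fin m, (a / 2 * x j.castSucc ^ 2 + B j * x j.castSucc + C j)) = S a B C x from rfl]
    field_simp
    ring
  · -- (d)
    intro x hx
    rw [pderiv'_congr (hevn x hx) _,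
      pderiv'_of_hasFDerivAt (hasFDerivAt_gn a b B C x hx.ne') _, hpn x hx,
      hf x hx]
    have h0 := hx.ne'
    simp [P, Pi.single_apply, hne, gn]
    rw [show (∑ j : Fin m, (a / 2 * x j.castSucc ^ 2 + B j * x j.castSucc + C j)) = S a B C x from rfl]
    field_simp
    ring
end

section
/- Let n ≥ 3 and let U = {x ∈ ℝⁿ : x_n > 0}. Suppose f : U → ℝ is a smooth function satisfying, at every point of U: ∂²f/∂x_i∂x_j = 0 for all distinct i, j ∈ {1,…,n−1}, and x_n·∂²f/∂x_i∂x_n + ∂f/∂x_i = 0 for every i ∈ {1,…,n−1}. Then there exist smooth functions L_1,…,L_{n−1} : ℝ → ℝ and a smooth function r : (0,∞) → ℝ such that f(x) = (1/x_n)·Σ_{j=1}^{n−1} L_j(x_j) + r(x_n) for all x ∈ U. -/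
private lemma htop1 : ((⊤ : ℕ∞) : WithTop ℕ∞) + 1 ≤ ((⊤ : ℕ∞) : WithTop ℕ∞) := by
  exact_mod_cast le_of_eq (by simp)

private lemma hone1 : ((⊤ : ℕ∞) : WithTop ℕ∞) ≠ 0 := by
  simp


open Set

/-- smoothness of partial derivative on an open set -/
lemma contDiffOn_pderiv' {N : ℕ} {φ : (Fin N → ℝ) → ℝ} {s : Set (Fin N → ℝ)} (hs : IsOpen s)
    (hφ : ContDiffOn ℝ (⊤ : ℕ∞) φ s) (i : Fin N) :
    ContDiffOn ℝ (⊤ : ℕ∞) (pderiv' φ i) s := by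
  have h1 : ContDiffOn ℝ (⊤ : ℕ∞) (fderiv ℝ φ) s := hφ.fderiv_of_isOpen hs htop1
  exact (ContinuousLinearMap.apply ℝ ℝ (Pi.single i 1)).contDiff.comp_contDiffOn h1

/-- decomposition of a vector as sum of coordinate singles -/
lemma vec_decomp {N : ℕ} (v : Fin N → ℝ) :
    v = ∑ j : Fin N, (v j) • (Pi.single j (1:ℝ) : Fin N → ℝ) := by
  funext k
  simp [Finset.sum_apply, Pi.single_apply]

/-- constancy along directions with vanishing partials, on the upper half space -/
lemma const_along {N : ℕ} (φ : (Fin (N + 1) → ℝ) → ℝ)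
    (hφ : DifferentiableOn ℝ φ {x : Fin (N + 1) → ℝ | 0 < x (Fin.last N)})
    (T : Set (Fin (N + 1)))
    (hT : ∀ x : Fin (N + 1) → ℝ, 0 < x (Fin.last N) → ∀ j ∈ T,
      fderiv ℝ φ x (Pi.single j 1) = 0)
    (x y : Fin (N + 1) → ℝ) (hx : 0 < x (Fin.last N)) (hy : 0 < y (Fin.last N))
    (hxy : ∀ j ∉ T, x j = y j) : φ x = φ y := by
  set U : Set (Fin (N + 1) → ℝ) := {x | 0 < x (Fin.last N)} with hUdef
  have hU : IsOpen U := isOpen_lt continuous_const (continuous_apply _)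
  have hUconv : Convex ℝ U := by
    have : U = (ContinuousLinearMap.proj (R := ℝ) (φ := fun _ : Fin (N+1) => ℝ) (Fin.last N)) ⁻¹' (Ioi 0) := rfl
    rw [this]
    exact (convex_Ioi (0:ℝ)).linear_preimage _
  set ℓ : ℝ → (Fin (N + 1) → ℝ) := fun t => x + t • (y - x) with hℓdef
  have hℓcont : Continuous ℓ := by continuity
  set s : Set ℝ := ℓ ⁻¹' U with hsdef
  have hsopen : IsOpen s := hU.preimage hℓcont
  have hmem_iff : ∀ t : ℝ, (t ∈ s ↔ 0 < x (Fin.last N) + t * (y (Fin.last N) - x (Fin.last N))) := by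
    intro t
    show (0 < (x + t • (y - x)) (Fin.last N)) ↔ _
    simp [Pi.add_apply, Pi.smul_apply, Pi.sub_apply, smul_eq_mul]
  have hsconv : Convex ℝ s := by
    intro a ha b hb p q hp hq hpq
    rw [hmem_iff] at ha hb
    have goal : p • a + q • b ∈ s := by
      rw [hmem_iff]
      simp only [smul_eq_mul]
      have key : x (Fin.last N) + (p * a + q * b) * (y (Fin.last N) - x (Fin.last N))
          = p * (x (Fin.last N) + a * (y (Fin.last N) - x (Fin.last N)))
            + q * (x (Fin.last N) + b * (y (Fin.last N) - x (Fin.last N))) := by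
        linear_combination (x (Fin.last N)) * hpq.symm
      rw [key]
      rcases eq_or_lt_of_le hp with hp0 | hp0
      · have hq0 : 0 < q := by linarith
        nlinarith [mul_pos hq0 hb]
      · nlinarith [mul_pos hp0 ha, mul_nonneg hq hb.le]
    exact goal
  have h0s : (0:ℝ) ∈ s := by
    show ℓ 0 ∈ U
    simp only [hℓdef, zero_smul, add_zero]
    exact hx
  have h1eq : ℓ 1 = y := by
    simp only [hℓdef, one_smul]
    abel
  have h1s : (1:ℝ) ∈ s := by
    show ℓ 1 ∈ U
    rw [h1eq]
    exact hy
  have hℓder : ∀ t : ℝ, HasDerivAt ℓ (y - x) t := fun t => by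
    exact (((hasDerivAt_id t).smul_const (y - x)).const_add x).congr_deriv (one_smul ℝ _)
  have hgder : ∀ t ∈ s, HasDerivAt (φ ∘ ℓ) 0 t := by
    intro t ht
    have hmem : ℓ t ∈ U := ht
    have hd : HasFDerivAt φ (fderiv ℝ φ (ℓ t)) (ℓ t) :=
      (hφ.differentiableAt (hU.mem_nhds hmem)).hasFDerivAt
    have hzero : fderiv ℝ φ (ℓ t) (y - x) = 0 := by
      rw [vec_decomp (y - x), map_sum]
      apply Finset.sum_eq_zero
      intro j _
      rw [map_smul]
      by_cases hj : j ∈ T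
      · rw [hT (ℓ t) hmem j hj]; simp
      · have hz : (y - x) j = 0 := by simp [hxy j hj]
        rw [hz]; simp
    have := hd.comp_hasDerivAt t (hℓder t)
    rwa [hzero] at this
  have hgdiff : DifferentiableOn ℝ (φ ∘ ℓ) s := by
    intro t ht
    exact ((hgder t ht).differentiableAt).differentiableWithinAt
  have := hsconv.is_const_of_fderivWithin_eq_zero hgdiff (fun t ht => by
    rw [fderivWithin_of_isOpen hsopen ht, ← toSpanSingleton_deriv, (hgder t ht).deriv]
    ext
    simp) h0s h1s
  have h0 : ℓ 0 = x := by simp [hℓdef]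
  have h1 : ℓ 1 = y := by simp [hℓdef]
  calc φ x = (φ ∘ ℓ) 0 := by rw [Function.comp_apply, h0]
    _ = (φ ∘ ℓ) 1 := this
    _ = φ y := by rw [Function.comp_apply, h1]

/-- symmetry of second partial derivatives -/
lemma pderiv'_comm {N : ℕ} {φ : (Fin N → ℝ) → ℝ} {s : Set (Fin N → ℝ)} (hs : IsOpen s)
    (hφ : ContDiffOn ℝ (⊤ : ℕ∞) φ s) {x : Fin N → ℝ} (hx : x ∈ s) (a b : Fin N) :
    pderiv' (pderiv' φ a) b x = pderiv' (pderiv' φ b) a x := by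
  have hdf : ∀ᶠ y in nhds x, HasFDerivAt φ (fderiv ℝ φ y) y := by
    filter_upwards [hs.mem_nhds hx] with y hy using
      ((hφ.differentiableOn hone1).differentiableAt (hs.mem_nhds hy)).hasFDerivAt
  have hd2 : HasFDerivAt (fderiv ℝ φ) (fderiv ℝ (fderiv ℝ φ) x) x :=
    (((hφ.fderiv_of_isOpen hs htop1).differentiableOn hone1).differentiableAt
      (hs.mem_nhds hx)).hasFDerivAt
  have hsym := second_derivative_symmetric_of_eventually hdf hd2
  have key : ∀ c d : Fin N, pderiv' (pderiv' φ c) d x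
      = fderiv ℝ (fderiv ℝ φ) x (Pi.single d 1) (Pi.single c 1) := by
    intro c d
    have hcomp0 : HasFDerivAt
        ((ContinuousLinearMap.apply ℝ ℝ (Pi.single c (1:ℝ)) : ((Fin N → ℝ) →L[ℝ] ℝ) →L[ℝ] ℝ)
          ∘ (fderiv ℝ φ))
        ((ContinuousLinearMap.apply ℝ ℝ (Pi.single c (1:ℝ))).comp
          (fderiv ℝ (fderiv ℝ φ) x)) x :=
      ((ContinuousLinearMap.apply ℝ ℝ (Pi.single c (1:ℝ)) : ((Fin N → ℝ) →L[ℝ] ℝ) →L[ℝ] ℝ)).hasFDerivAt.comp x hd2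
    have hcomp : HasFDerivAt (pderiv' φ c)
        ((ContinuousLinearMap.apply ℝ ℝ (Pi.single c (1:ℝ))).comp
          (fderiv ℝ (fderiv ℝ φ) x)) x := hcomp0
    show fderiv ℝ (pderiv' φ c) x (Pi.single d 1) = _
    rw [hcomp.fderiv]
    rfl
  rw [key a b, key b a, hsym]

/-- Let `n = m + 1 ≥ 3` and `U = {x ∈ ℝⁿ | xₙ > 0}`.  If `f` is smooth
on `U` and satisfies, at every point of `U`, `∂²f/∂xᵢ∂xⱼ = 0` for all distinct
`i, j ≤ n-1` and `xₙ ∂²f/∂xᵢ∂xₙ + ∂f/∂xᵢ = 0` for every `i ≤ n-1`, then there are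
smooth functions `L₁, …, L_{n-1} : ℝ → ℝ` and a smooth function `r : (0,∞) → ℝ` such
that `f x = (1/xₙ) ∑ⱼ Lⱼ(xⱼ) + r(xₙ)` on `U`.
(The last coordinate `x (Fin.last m)` plays the role of `xₙ`.) -/
theorem stmt_4 {m : ℕ} (hm : 2 ≤ m)
    (f : (Fin (m + 1) → ℝ) → ℝ)
    (hf : ContDiffOn ℝ (⊤ : ℕ∞) f {x : Fin (m + 1) → ℝ | 0 < x (Fin.last m)})
    (ha : ∀ x : Fin (m + 1) → ℝ, 0 < x (Fin.last m) → ∀ i j : Fin m, i ≠ j →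
      pderiv' (pderiv' f j.castSucc) i.castSucc x = 0)
    (hb : ∀ x : Fin (m + 1) → ℝ, 0 < x (Fin.last m) → ∀ i : Fin m,
      x (Fin.last m) * pderiv' (pderiv' f (Fin.last m)) i.castSucc x
        + pderiv' f i.castSucc x = 0) :
    ∃ (L : Fin m → ℝ → ℝ) (r : ℝ → ℝ),
      (∀ j : Fin m, ContDiff ℝ (⊤ : ℕ∞) (L j)) ∧
      ContDiffOn ℝ (⊤ : ℕ∞) r (Set.Ioi (0 : ℝ)) ∧
      ∀ x : Fin (m + 1) → ℝ, 0 < x (Fin.last m) →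
        f x = (1 / x (Fin.last m)) * (∑ j : Fin m, L j (x j.castSucc))
          + r (x (Fin.last m)) := by
  classical
  set U : Set (Fin (m + 1) → ℝ) := {x | 0 < x (Fin.last m)} with hUdef
  have hU : IsOpen U := isOpen_lt continuous_const (continuous_apply _)
  have hcne : ∀ i : Fin m, i.castSucc ≠ Fin.last m := fun i => (Fin.castSucc_lt_last i).ne
  have hp : ∀ i : Fin (m + 1), ContDiffOn ℝ (⊤ : ℕ∞) (pderiv' f i) U :=
    fun i => contDiffOn_pderiv' hU hf i
  set e : Fin m → ℝ → (Fin (m + 1) → ℝ) :=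
    fun i t => Function.update (Pi.single (Fin.last m) (1:ℝ)) i.castSucc t with hedef
  have heval_last : ∀ (i : Fin m) (t : ℝ), e i t (Fin.last m) = 1 := by
    intro i t
    simp [hedef, Function.update_apply, Ne.symm (hcne i)]
  have heval_self : ∀ (i : Fin m) (t : ℝ), e i t i.castSucc = t := by
    intro i t; simp [hedef]
  have heU : ∀ i t, e i t ∈ U := by
    intro i t
    show 0 < e i t (Fin.last m)
    rw [heval_last]; norm_num
  have hesmooth : ∀ i, ContDiff ℝ (⊤ : ℕ∞) (e i) := by
    intro i
    rw [contDiff_pi]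
    intro l
    by_cases hl : l = i.castSucc
    · simpa [hedef, Function.update_apply, hl] using contDiff_fun_id
    · have : (fun t : ℝ => e i t l)
          = fun _ : ℝ => (Pi.single (Fin.last m) (1:ℝ) : Fin (m+1) → ℝ) l := by
        funext t; simp [hedef, Function.update_apply, hl]
      rw [this]; exact contDiff_const
  set L : Fin m → ℝ → ℝ := fun i t => f (e i t) with hLdef
  have hLsmooth : ∀ i, ContDiff ℝ (⊤ : ℕ∞) (L i) :=
    fun i => hf.comp_contDiff (hesmooth i) (fun t => heU i t)
  have heder : ∀ (i : Fin m) (t : ℝ), HasDerivAt (e i) (Pi.single i.castSucc (1:ℝ)) t := by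
    intro i t
    rw [hasDerivAt_pi]
    intro l
    by_cases hl : l = i.castSucc
    · subst hl
      have h1 : (fun s : ℝ => e i s i.castSucc) = fun s => s := funext fun s => heval_self i s
      rw [h1, Pi.single_eq_same]
      exact hasDerivAt_id t
    · have h1 : (fun s : ℝ => e i s l)
          = fun _ => (Pi.single (Fin.last m) (1:ℝ) : Fin (m+1) → ℝ) l := by
        funext s; simp [hedef, Function.update_apply, hl]
      rw [h1, Pi.single_eq_of_ne hl]
      exact hasDerivAt_const t _
  have hLder : ∀ (i : Fin m) (t : ℝ), HasDerivAt (L i) (pderiv' f i.castSucc (e i t)) t := by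
    intro i t
    have hdf : HasFDerivAt f (fderiv ℝ f (e i t)) (e i t) :=
      ((hf.differentiableOn hone1).differentiableAt (hU.mem_nhds (heU i t))).hasFDerivAt
    exact hdf.comp_hasDerivAt t (heder i t)
  set P : Fin m → (Fin (m + 1) → ℝ) → ℝ :=
    fun i x => x (Fin.last m) * pderiv' f i.castSucc x with hPdef
  have hPder : ∀ i, ∀ x ∈ U, ∀ j, j ≠ i.castSucc → fderiv ℝ (P i) x (Pi.single j 1) = 0 := by
    intro i x hx j hj
    have hdp : HasFDerivAt (pderiv' f i.castSucc) (fderiv ℝ (pderiv' f i.castSucc) x) x :=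
      (((hp i.castSucc).differentiableOn hone1).differentiableAt (hU.mem_nhds hx)).hasFDerivAt
    have hprod : HasFDerivAt (P i)
        (x (Fin.last m) • fderiv ℝ (pderiv' f i.castSucc) x
          + pderiv' f i.castSucc x • (ContinuousLinearMap.proj (Fin.last m)
            : (Fin (m+1) → ℝ) →L[ℝ] ℝ)) x :=
      (ContinuousLinearMap.proj (Fin.last m)).hasFDerivAt.mul hdp
    rw [hprod.fderiv]
    simp only [ContinuousLinearMap.add_apply, ContinuousLinearMap.coe_smul', Pi.smul_apply,
      ContinuousLinearMap.proj_apply, smul_eq_mul]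
    rcases eq_or_ne j (Fin.last m) with rfl | hjl
    · have hsym := pderiv'_comm hU hf hx i.castSucc (Fin.last m)
      have heq : fderiv ℝ (pderiv' f i.castSucc) x (Pi.single (Fin.last m) 1)
          = pderiv' (pderiv' f (Fin.last m)) i.castSucc x := hsym
      rw [heq, Pi.single_eq_same, mul_one]
      exact hb x hx i
    · obtain ⟨j', rfl⟩ := Fin.eq_castSucc_of_ne_last hjl
      have hne : j' ≠ i := fun h => hj (by rw [h])
      have h0 : fderiv ℝ (pderiv' f i.castSucc) x (Pi.single j'.castSucc 1) = 0 :=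
        ha x hx j' i hne
      rw [h0, Pi.single_eq_of_ne (Ne.symm (hcne j'))]
      ring
  have hprojdiff : Differentiable ℝ (fun x : Fin (m+1) → ℝ => x (Fin.last m)) :=
    (ContinuousLinearMap.proj (Fin.last m) : (Fin (m+1) → ℝ) →L[ℝ] ℝ).differentiable
  have hPdiff : ∀ i, DifferentiableOn ℝ (P i) U :=
    fun i => (hprojdiff.differentiableOn).mul ((hp i.castSucc).differentiableOn hone1)
  have hkey : ∀ i, ∀ x ∈ U, x (Fin.last m) * pderiv' f i.castSucc x
      = pderiv' f i.castSucc (e i (x i.castSucc)) := by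
    intro i x hx
    have hc := const_along (P i) (hPdiff i) ({i.castSucc}ᶜ)
      (fun z hz j hjT => hPder i z hz j (by simpa using hjT))
      x (e i (x i.castSucc)) hx (heU i _)
      (by
        intro j hj
        have hj' : j = i.castSucc := by simpa using hj
        subst hj'
        rw [heval_self])
    simpa [hPdef, heval_last, one_mul] using hc
  set F : (Fin (m + 1) → ℝ) → ℝ :=
    fun x => f x - (x (Fin.last m))⁻¹ * ∑ j : Fin m, L j (x j.castSucc) with hFdef
  have hsum_diff : Differentiable ℝ (fun x : Fin (m+1) → ℝ => ∑ j : Fin m, L j (x j.castSucc)) := by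
    apply Differentiable.fun_sum
    intro j _
    exact ((hLsmooth j).differentiable hone1).comp
      (ContinuousLinearMap.proj j.castSucc : (Fin (m+1) → ℝ) →L[ℝ] ℝ).differentiable
  have hinv_diff : DifferentiableOn ℝ (fun x : Fin (m+1) → ℝ => (x (Fin.last m))⁻¹) U := by
    apply DifferentiableOn.inv
    · exact hprojdiff.differentiableOn
    · intro x hx; exact ne_of_gt hx
  have hFdiff : DifferentiableOn ℝ F U :=
    (hf.differentiableOn hone1).sub (hinv_diff.mul hsum_diff.differentiableOn)
  have hFderiv : ∀ x ∈ U, ∀ j : Fin (m+1), j ≠ Fin.last m →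
      fderiv ℝ F x (Pi.single j 1) = 0 := by
    intro x hx j hj
    obtain ⟨i, rfl⟩ := Fin.eq_castSucc_of_ne_last hj
    have hxpos : (0:ℝ) < x (Fin.last m) := hx
    have hfx : HasFDerivAt f (fderiv ℝ f x) x :=
      ((hf.differentiableOn hone1).differentiableAt (hU.mem_nhds hx)).hasFDerivAt
    have hinv : HasFDerivAt (fun y : Fin (m+1) → ℝ => (y (Fin.last m))⁻¹)
        ((-((x (Fin.last m)) ^ 2)⁻¹) • (ContinuousLinearMap.proj (Fin.last m)
          : (Fin (m+1) → ℝ) →L[ℝ] ℝ)) x :=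
      (hasDerivAt_inv (ne_of_gt hxpos)).comp_hasFDerivAt x
        (ContinuousLinearMap.proj (Fin.last m) : (Fin (m+1) → ℝ) →L[ℝ] ℝ).hasFDerivAt
    have hsum : HasFDerivAt (fun y : Fin (m+1) → ℝ => ∑ j : Fin m, L j (y j.castSucc))
        (∑ j : Fin m, pderiv' f j.castSucc (e j (x j.castSucc))
          • (ContinuousLinearMap.proj j.castSucc : (Fin (m+1) → ℝ) →L[ℝ] ℝ)) x := by
      apply HasFDerivAt.fun_sum
      intro j _
      exact (hLder j (x j.castSucc)).comp_hasFDerivAt x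
        (ContinuousLinearMap.proj j.castSucc : (Fin (m+1) → ℝ) →L[ℝ] ℝ).hasFDerivAt
    have hF : HasFDerivAt F (fderiv ℝ f x -
        ((x (Fin.last m))⁻¹ • (∑ j : Fin m, pderiv' f j.castSucc (e j (x j.castSucc))
            • (ContinuousLinearMap.proj j.castSucc : (Fin (m+1) → ℝ) →L[ℝ] ℝ))
          + (∑ j : Fin m, L j (x j.castSucc)) • (-((x (Fin.last m)) ^ 2)⁻¹
            • (ContinuousLinearMap.proj (Fin.last m) : (Fin (m+1) → ℝ) →L[ℝ] ℝ)))) x :=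
      hfx.sub (hinv.mul hsum)
    rw [hF.fderiv]
    have hs1 : (Pi.single i.castSucc (1:ℝ) : Fin (m+1) → ℝ) (Fin.last m) = 0 :=
      Pi.single_eq_of_ne (Ne.symm (hcne i)) 1
    have hs2 : ∀ j : Fin m, (Pi.single i.castSucc (1:ℝ) : Fin (m+1) → ℝ) (j.castSucc)
        = if j = i then 1 else 0 := by
      intro j
      rcases eq_or_ne j i with rfl | hji
      · simp
      · rw [Pi.single_eq_of_ne ((Fin.castSucc_injective m).ne hji), if_neg hji]
    simp only [ContinuousLinearMap.coe_sub', Pi.sub_apply, ContinuousLinearMap.add_apply,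
      ContinuousLinearMap.coe_smul', Pi.smul_apply, ContinuousLinearMap.coe_sum',
      Finset.sum_apply, ContinuousLinearMap.proj_apply, smul_eq_mul, hs1, mul_zero]
    have hsum_eval : (∑ j : Fin m, pderiv' f j.castSucc (e j (x j.castSucc))
        * (Pi.single i.castSucc (1:ℝ) : Fin (m+1) → ℝ) (j.castSucc))
        = pderiv' f i.castSucc (e i (x i.castSucc)) := by
      rw [Finset.sum_congr rfl (fun j _ => by rw [hs2 j])]
      simp [mul_ite, mul_one, mul_zero]
    rw [hsum_eval,
      show (fderiv ℝ f x) (Pi.single i.castSucc (1:ℝ)) = pderiv' f i.castSucc x from rfl,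
      ← hkey i x hx]
    field_simp
    ring
  refine ⟨L, fun t => f (Pi.single (Fin.last m) t) - t⁻¹ * ∑ j : Fin m, L j 0,
    hLsmooth, ?_, ?_⟩
  · apply ContDiffOn.sub
    · have hc : ContDiff ℝ (⊤:ℕ∞)
          (fun t : ℝ => (Pi.single (Fin.last m) t : Fin (m+1) → ℝ)) := by
        rw [contDiff_pi]
        intro l
        rcases eq_or_ne l (Fin.last m) with rfl | hl
        · simpa using contDiff_fun_id
        · have : (fun t : ℝ => (Pi.single (Fin.last m) t : Fin (m+1) → ℝ) l)
              = fun _ => 0 := by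
            funext t; simp [Pi.single_eq_of_ne hl]
          rw [this]; exact contDiff_const
      exact hf.comp hc.contDiffOn
        (fun t ht => by
          simp only [Set.mem_preimage, hUdef, Set.mem_setOf_eq, Pi.single_eq_same]
          exact ht)
    · exact (contDiffOn_id.inv (fun t ht => ne_of_gt ht)).mul contDiffOn_const
  · intro x hx
    have hFeq := const_along F hFdiff ({Fin.last m}ᶜ)
      (fun z hz j hjT => hFderiv z hz j (by simpa using hjT))
      x (Pi.single (Fin.last m) (x (Fin.last m))) hx
      (by show (0:ℝ) < _; rw [Pi.single_eq_same]; exact hx)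
      (by
        intro j hj
        have hj' : j = Fin.last m := by simpa using hj
        subst hj'
        rw [Pi.single_eq_same])
    have hzero : ∀ j : Fin m,
        (Pi.single (Fin.last m) (x (Fin.last m)) : Fin (m+1) → ℝ) j.castSucc = 0 :=
      fun j => Pi.single_eq_of_ne (hcne j) _
    simp only [hFdef] at hFeq
    simp only [hzero, Pi.single_eq_same] at hFeq
    rw [one_div]
    show f x = (x (Fin.last m))⁻¹ * (∑ j : Fin m, L j (x j.castSucc))
      + (f (Pi.single (Fin.last m) (x (Fin.last m)))
        - (x (Fin.last m))⁻¹ * ∑ j : Fin m, L j 0)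
    linarith
end
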